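/- Let g : [0,∞) → ℝ be any function. For all reals z ≥ 0 and ℓ ≥ 0, the function w ↦ e^{−ℓw}(1 − e^{−zw})² − z² h_E(w)² is ν_E-integrable, the function r ↦ (1 − e^{−r})² − h_D(r)² is ν_D-integrable, and Σ_{j=0}^{2} C(2,j) (−1)^{2−j} ( −j z g(z) − γ_j^D z + γ_ℓ^E − γ_{jz+ℓ}^E ) = z² β_E + ∫_{(−1,∞)} ( e^{−ℓ w} (1 − e^{−z w})² − z² h_E(w)² ) dν_E(w) + z β_D + z ∫_{(0,∞)} ( (1 − e^{−r})² − h_D(r)² ) dν_D(r), where β_E = σ_E² + ∫ h_E(w)² dν_E(w) and β_D = σ_D² + ∫ h_D(r)² dν_D(r). -/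

import Mathlib

/-!
With `ψₓ(w) = 1 - e^{-xw} - x h(w)`, the sum in the statement is a second difference in `x` of the
Lévy–Khintchine exponents. The drift cancels in a second difference, the Gaussian part contributes
`z² σ²`, and pointwise `2ψ_{z+a} - ψ_a - ψ_{2z+a} = e^{-aw} (1 - e^{-zw})²`; the interaction
term `j z g(z)` is linear in `j` and cancels as well. Every `ψₓ` with `x ≥ 0`, and `h²`, is
`O(w²)` at `0` and bounded on `(-1, ∞)`, hence integrable against a Lévy measure.
-/

open MeasureTheory Set

structure IsTruncationFunction (h : ℝ → ℝ) (s : Set ℝ) : Prop where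
  continuousOn : ContinuousOn h s
  bounded : ∃ M, ∀ w ∈ s, |h w| ≤ M
  eq_id_near_zero : ∃ δ > 0, ∀ w ∈ s, |w| < δ → h w = w

noncomputable def levyIntegrand (h : ℝ → ℝ) (x w : ℝ) : ℝ :=
  1 - Real.exp (-x * w) - x * h w

theorem integrableOn_of_abs_le_sq_of_abs_le {μ : Measure ℝ} {s : Set ℝ} (hs : MeasurableSet s)
    (hμ : IntegrableOn (fun w => min (w ^ 2) 1) s μ) {f : ℝ → ℝ}
    (hf : AEStronglyMeasurable f (μ.restrict s)) {δ C M : ℝ} (hδ : 0 < δ)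
    (hnear : ∀ w ∈ s, |w| < δ → |f w| ≤ C * w ^ 2) (hbdd : ∀ w ∈ s, |f w| ≤ M) :
    IntegrableOn f s μ := by
  set d := min δ 1
  have hd : 0 < d := lt_min hδ one_pos
  have hd1 : d ≤ 1 := min_le_right _ _
  refine Integrable.mono' (hμ.const_mul (max C (M / d ^ 2))) hf ?_
  rw [ae_restrict_iff' hs]
  refine Filter.Eventually.of_forall fun w hw => ?_
  rw [Real.norm_eq_abs]
  rcases lt_or_ge |w| d with hw_lt | hw_ge
  · have hmin : min (w ^ 2) 1 = w ^ 2 :=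
      min_eq_left (by rw [← sq_abs]; exact pow_le_one₀ (abs_nonneg w) (hw_lt.le.trans hd1))
    calc |f w| ≤ C * w ^ 2 := hnear w hw (hw_lt.trans_le (min_le_left _ _))
      _ ≤ max C (M / d ^ 2) * min (w ^ 2) 1 := by
        rw [hmin]; gcongr; exact le_max_left _ _
  · have hmin : d ^ 2 ≤ min (w ^ 2) 1 :=
      le_min (by rw [← sq_abs w]; exact pow_le_pow_left₀ hd.le hw_ge 2) (pow_le_one₀ hd.le hd1)
    have hM : 0 ≤ M / d ^ 2 := div_nonneg ((abs_nonneg _).trans (hbdd w hw)) (sq_nonneg d)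
    calc |f w| ≤ M := hbdd w hw
      _ = M / d ^ 2 * d ^ 2 := by field_simp
      _ ≤ M / d ^ 2 * min (w ^ 2) 1 := by gcongr
      _ ≤ max C (M / d ^ 2) * min (w ^ 2) 1 := by gcongr; exact le_max_right _ _

section LevyMeasure

variable {μ : Measure ℝ} {s : Set ℝ} {h : ℝ → ℝ}

theorem IsTruncationFunction.integrableOn_sq (hh : IsTruncationFunction h s)
    (hs : MeasurableSet s) (hμ : IntegrableOn (fun w => min (w ^ 2) 1) s μ) :
    IntegrableOn (fun w => h w ^ 2) s μ := by
  obtain ⟨M, hM⟩ := hh.bounded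
  obtain ⟨δ, hδ, hid⟩ := hh.eq_id_near_zero
  refine integrableOn_of_abs_le_sq_of_abs_le hs hμ
    ((hh.continuousOn.pow 2).aestronglyMeasurable hs) hδ (C := 1) (M := M ^ 2)
    (fun w hw hwδ => ?_) (fun w hw => ?_)
  · rw [hid w hw hwδ, one_mul, abs_sq]
  · rw [abs_sq]
    exact sq_le_sq.2 ((hM w hw).trans (le_abs_self M))

theorem IsTruncationFunction.integrableOn_levyIntegrand (hh : IsTruncationFunction h s)
    (hs : MeasurableSet s) (hs1 : s ⊆ Ioi (-1))
    (hμ : IntegrableOn (fun w => min (w ^ 2) 1) s μ) {x : ℝ} (hx : 0 ≤ x) :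
    IntegrableOn (levyIntegrand h x) s μ := by
  obtain ⟨M, hM⟩ := hh.bounded
  obtain ⟨δ, hδ, hid⟩ := hh.eq_id_near_zero
  -- below `(x + 1)⁻¹` we have `|x w| ≤ 1`, where `|e^t - 1 - t| ≤ t²`
  refine integrableOn_of_abs_le_sq_of_abs_le hs hμ
    (((continuous_const.sub (by fun_prop)).continuousOn.sub
      (continuousOn_const.mul hh.continuousOn)).aestronglyMeasurable hs)
    (δ := min δ (x + 1)⁻¹) (C := x ^ 2) (M := 1 + Real.exp x + x * M) (by positivity)
    (fun w hw hwδ => ?_) (fun w hw => ?_)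
  · have hxw : |-x * w| ≤ 1 := by
      have hw' : |w| ≤ (x + 1)⁻¹ := hwδ.le.trans (min_le_right _ _)
      rw [abs_mul, abs_neg, abs_of_nonneg hx]
      calc x * |w| ≤ x * (x + 1)⁻¹ := by gcongr
        _ ≤ 1 := by rw [← div_eq_mul_inv, div_le_one (by positivity)]; linarith
    rw [levyIntegrand, hid w hw (hwδ.trans_le (min_le_left _ _))]
    calc |1 - Real.exp (-x * w) - x * w| = |Real.exp (-x * w) - 1 - -x * w| := by
          rw [← abs_neg]; ring_nf
      _ ≤ (-x * w) ^ 2 := Real.abs_exp_sub_one_sub_id_le hxw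
      _ = x ^ 2 * w ^ 2 := by ring
  · have hexp : Real.exp (-x * w) ≤ Real.exp x :=
      Real.exp_le_exp.2 (by nlinarith [mem_Ioi.1 (hs1 hw)])
    have hhw := abs_le.1 (hM w hw)
    rw [levyIntegrand, abs_le]
    constructor <;> nlinarith [Real.exp_pos (-x * w)]

end LevyMeasure

theorem exp_mul_one_sub_exp_sq_eq_levyIntegrand (h : ℝ → ℝ) (a z w : ℝ) :
    Real.exp (-a * w) * (1 - Real.exp (-z * w)) ^ 2 =
      2 * levyIntegrand h (z + a) w - levyIntegrand h a w - levyIntegrand h (2 * z + a) w := by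
  rw [levyIntegrand, levyIntegrand, levyIntegrand, show -(z + a) * w = -z * w + -a * w by ring,
    show -(2 * z + a) * w = -z * w + -z * w + -a * w by ring]
  simp only [Real.exp_add]
  ring

theorem levyExponent_second_difference {μ : Measure ℝ} {γ h : ℝ → ℝ} {α σ : ℝ}
    (hγ : ∀ x, γ x = α * x - 1 / 2 * σ ^ 2 * x ^ 2 + ∫ w, levyIntegrand h x w ∂μ) {a z : ℝ}
    (ha : Integrable (levyIntegrand h a) μ) (haz : Integrable (levyIntegrand h (z + a)) μ)
    (ha2z : Integrable (levyIntegrand h (2 * z + a)) μ)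
    (hh : Integrable (fun w => h w ^ 2) μ) :
    Integrable (fun w => Real.exp (-a * w) * (1 - Real.exp (-z * w)) ^ 2 - z ^ 2 * h w ^ 2) μ ∧
      2 * γ (z + a) - γ a - γ (2 * z + a) =
        z ^ 2 * (σ ^ 2 + ∫ w, h w ^ 2 ∂μ) +
          ∫ w, (Real.exp (-a * w) * (1 - Real.exp (-z * w)) ^ 2 - z ^ 2 * h w ^ 2) ∂μ := by
  have h2az : Integrable (fun w => 2 * levyIntegrand h (z + a) w) μ := haz.const_mul 2
  have hsum : Integrable (fun w => 2 * levyIntegrand h (z + a) w - levyIntegrand h a w) μ :=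
    h2az.sub ha
  have hdiff : Integrable (fun w => 2 * levyIntegrand h (z + a) w - levyIntegrand h a w -
      levyIntegrand h (2 * z + a) w) μ := hsum.sub ha2z
  have hzh : Integrable (fun w => z ^ 2 * h w ^ 2) μ := hh.const_mul _
  simp only [exp_mul_one_sub_exp_sq_eq_levyIntegrand h]
  refine ⟨hdiff.sub hzh, ?_⟩
  rw [integral_sub hdiff hzh, integral_sub hsum ha2z, integral_sub h2az ha, integral_const_mul,
    integral_const_mul, hγ, hγ, hγ]
  ring

theorem stmt14_general
    -- truncation function h_E on (-1, ∞) and Lévy triplet of the environment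
    (hE : ℝ → ℝ) (hEcont : ContinuousOn hE (Ioi (-1 : ℝ)))
    (hEbdd : ∃ M : ℝ, ∀ w ∈ Ioi (-1 : ℝ), |hE w| ≤ M)
    (hEid : ∃ δ > (0 : ℝ), ∀ w : ℝ, |w| < δ → hE w = w)
    (αE σE : ℝ)
    (νE : Measure ℝ) (hνEint : IntegrableOn (fun w => min (w ^ 2) 1) (Ioi (-1)) νE)
    -- truncation function h_D on (0, ∞) and Lévy triplet of the demography
    (hD : ℝ → ℝ) (hDcont : ContinuousOn hD (Ioi (0 : ℝ)))
    (hDbdd : ∃ M : ℝ, ∀ r ∈ Ioi (0 : ℝ), |hD r| ≤ M)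
    (hDid : ∃ δ > (0 : ℝ), ∀ r ∈ Ioo (0 : ℝ) δ, hD r = r)
    (αD σD : ℝ)
    (νD : Measure ℝ) (hνDint : IntegrableOn (fun r => min (r ^ 2) 1) (Ioi 0) νD)
    -- the γ functions and the β coefficients
    (γE γD : ℝ → ℝ)
    (hγE : ∀ x : ℝ, γE x = αE * x - 1 / 2 * σE ^ 2 * x ^ 2 +
      ∫ w in Ioi (-1 : ℝ), (1 - Real.exp (-x * w) - x * hE w) ∂νE)
    (hγD : ∀ x : ℝ, γD x = αD * x - 1 / 2 * σD ^ 2 * x ^ 2 +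
      ∫ r in Ioi (0 : ℝ), (1 - Real.exp (-x * r) - x * hD r) ∂νD)
    (βE βD : ℝ)
    (hβE : βE = σE ^ 2 + ∫ w in Ioi (-1 : ℝ), hE w ^ 2 ∂νE)
    (hβD : βD = σD ^ 2 + ∫ r in Ioi (0 : ℝ), hD r ^ 2 ∂νD)
    -- interaction function
    (g : ℝ → ℝ)
    (z : ℝ) (hz : 0 ≤ z) (ℓ : ℝ) (hℓ : 0 ≤ ℓ) :
    IntegrableOn
      (fun w => Real.exp (-ℓ * w) * (1 - Real.exp (-z * w)) ^ 2 - z ^ 2 * hE w ^ 2)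
      (Ioi (-1)) νE ∧
    IntegrableOn (fun r => (1 - Real.exp (-r)) ^ 2 - hD r ^ 2) (Ioi 0) νD ∧
    (∑ j ∈ Finset.range 3, ((2 : ℕ).choose j : ℝ) * (-1 : ℝ) ^ (2 - j) *
        (-(j : ℝ) * z * g z - γD (j : ℝ) * z + γE ℓ - γE ((j : ℝ) * z + ℓ))) =
      z ^ 2 * βE +
        (∫ w in Ioi (-1 : ℝ),
          (Real.exp (-ℓ * w) * (1 - Real.exp (-z * w)) ^ 2 - z ^ 2 * hE w ^ 2) ∂νE) +
        z * βD +
        z * ∫ r in Ioi (0 : ℝ), ((1 - Real.exp (-r)) ^ 2 - hD r ^ 2) ∂νD := by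
  have hEtrunc : IsTruncationFunction hE (Ioi (-1)) := by
    obtain ⟨δ, hδ, hid⟩ := hEid
    exact ⟨hEcont, hEbdd, δ, hδ, fun w _ => hid w⟩
  have hDtrunc : IsTruncationFunction hD (Ioi 0) := by
    obtain ⟨δ, hδ, hid⟩ := hDid
    exact ⟨hDcont, hDbdd, δ, hδ, fun r hr hrδ => hid r ⟨hr, (le_abs_self r).trans_lt hrδ⟩⟩
  have hψE {x : ℝ} (hx : 0 ≤ x) :=
    hEtrunc.integrableOn_levyIntegrand measurableSet_Ioi subset_rfl hνEint hx
  have hψD {x : ℝ} (hx : 0 ≤ x) :=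
    hDtrunc.integrableOn_levyIntegrand measurableSet_Ioi (Ioi_subset_Ioi (by norm_num)) hνDint hx
  obtain ⟨hintE, hdiffE⟩ := levyExponent_second_difference (z := z) hγE (hψE hℓ)
    (hψE (by positivity)) (hψE (by positivity)) (hEtrunc.integrableOn_sq measurableSet_Ioi hνEint)
  obtain ⟨hintD, hdiffD⟩ := levyExponent_second_difference (a := 0) (z := 1) hγD (hψD le_rfl)
    (hψD (by norm_num)) (hψD (by norm_num)) (hDtrunc.integrableOn_sq measurableSet_Ioi hνDint)
  norm_num at hintD hdiffD
  refine ⟨hintE, hintD, ?_⟩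
  simp only [Finset.sum_range_succ, Finset.sum_range_zero]
  norm_num
  rw [hβE, hβD]
  simp only [neg_mul] at hdiffE
  linear_combination hdiffE + z * hdiffD

/-- Identity (4.19) for `k = 2`: the alternating binomial sum of the limiting
characteristics in terms of `β_E`, `β_D` and the jump integrals. -/
theorem stmt14
    -- truncation function h_E on (-1, ∞) and Lévy triplet of the environment
    (hE : ℝ → ℝ) (hEcont : ContinuousOn hE (Ioi (-1 : ℝ)))
    (hEbdd : ∃ M : ℝ, ∀ w ∈ Ioi (-1 : ℝ), |hE w| ≤ M)
    (hEid : ∃ δ > (0 : ℝ), ∀ w : ℝ, |w| < δ → hE w = w)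
    (αE σE : ℝ) (hσE : 0 ≤ σE)
    (νE : Measure ℝ) (hνEint : IntegrableOn (fun w => min (w ^ 2) 1) (Ioi (-1)) νE)
    -- truncation function h_D on (0, ∞) and Lévy triplet of the demography
    (hD : ℝ → ℝ) (hDcont : ContinuousOn hD (Ioi (0 : ℝ)))
    (hDbdd : ∃ M : ℝ, ∀ r ∈ Ioi (0 : ℝ), |hD r| ≤ M)
    (hDid : ∃ δ > (0 : ℝ), ∀ r ∈ Ioo (0 : ℝ) δ, hD r = r)
    (αD σD : ℝ) (hσD : 0 ≤ σD)
    (νD : Measure ℝ) (hνDint : IntegrableOn (fun r => min (r ^ 2) 1) (Ioi 0) νD)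
    -- the γ functions and the β coefficients
    (γE γD : ℝ → ℝ)
    (hγE : ∀ x : ℝ, γE x = αE * x - 1 / 2 * σE ^ 2 * x ^ 2 +
      ∫ w in Ioi (-1 : ℝ), (1 - Real.exp (-x * w) - x * hE w) ∂νE)
    (hγD : ∀ x : ℝ, γD x = αD * x - 1 / 2 * σD ^ 2 * x ^ 2 +
      ∫ r in Ioi (0 : ℝ), (1 - Real.exp (-x * r) - x * hD r) ∂νD)
    (βE βD : ℝ)
    (hβE : βE = σE ^ 2 + ∫ w in Ioi (-1 : ℝ), hE w ^ 2 ∂νE)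
    (hβD : βD = σD ^ 2 + ∫ r in Ioi (0 : ℝ), hD r ^ 2 ∂νD)
    -- interaction function
    (g : ℝ → ℝ)
    (z : ℝ) (hz : 0 ≤ z) (ℓ : ℝ) (hℓ : 0 ≤ ℓ) :
    IntegrableOn
      (fun w => Real.exp (-ℓ * w) * (1 - Real.exp (-z * w)) ^ 2 - z ^ 2 * hE w ^ 2)
      (Ioi (-1)) νE ∧
    IntegrableOn (fun r => (1 - Real.exp (-r)) ^ 2 - hD r ^ 2) (Ioi 0) νD ∧
    (∑ j ∈ Finset.range 3, ((2 : ℕ).choose j : ℝ) * (-1 : ℝ) ^ (2 - j) *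
        (-(j : ℝ) * z * g z - γD (j : ℝ) * z + γE ℓ - γE ((j : ℝ) * z + ℓ))) =
      z ^ 2 * βE +
        (∫ w in Ioi (-1 : ℝ),
          (Real.exp (-ℓ * w) * (1 - Real.exp (-z * w)) ^ 2 - z ^ 2 * hE w ^ 2) ∂νE) +
        z * βD +
        z * ∫ r in Ioi (0 : ℝ), ((1 - Real.exp (-r)) ^ 2 - hD r ^ 2) ∂νD :=
  stmt14_general hE hEcont hEbdd hEid αE σE νE hνEint hD hDcont hDbdd hDid αD σD νD hνDint γE γD hγE
    hγD βE βD hβE hβD g z hz ℓ hℓ
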